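/- arXiv:1605.08375 — 3 statements merged into one kernel-verified Lean document; each statement's English description precedes it below -/
import Mathlib

section
/- If the SGM iterates are w₁ := 0 and w_{k+1} := w_k − η_k G(y_{j_k}, ⟨w_k, Φ(x_{j_k})⟩) Φ(x_{j_k}) for k = 1,…,t, with positive step-sizes η_k and arbitrary indices j_k, then ‖w_{t+1}‖ ≤ √( (a₀κ)² Σ_{k=1}^t η_k² + 2|V|₀ Σ_{k=1}^t η_k ). -/
noncomputable section

open Finset
open scoped RealInnerProductSpace

/-- SGM iterates driven by an arbitrary sequence of data points `v`: `w₁ = 0` and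
`w_{k+1} = w_k − η_k G(y_{j_k}, ⟨w_k, Φ(x_{j_k})⟩) Φ(x_{j_k})`, where `v k = (x_{j_k}, y_{j_k})`. -/
def sgmIterSeq {X Y H : Type*} [NormedAddCommGroup H] [InnerProductSpace ℝ H]
    (η : ℕ → ℝ) (G : Y → ℝ → ℝ) (Φ : X → H) (v : ℕ → X × Y) : ℕ → H
  | 0 => 0
  | 1 => 0
  | t + 2 =>
    let w := sgmIterSeq η G Φ v (t + 1)
    w - (η (t + 1) * G (v (t + 1)).2 ⟪w, Φ (v (t + 1)).1⟫) • Φ (v (t + 1)).1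

/-- Lemma 4: norm bound on the SGM iterates. -/
theorem sgm_iterate_norm_bound {X Y H : Type*}
    [NormedAddCommGroup H] [InnerProductSpace ℝ H] [CompleteSpace H]
    (Φ : X → H) (V G : Y → ℝ → ℝ) (a₀ κ V0 : ℝ)
    (hκ : ∀ x, ‖Φ x‖ ≤ κ)
    (hVnonneg : ∀ y a, 0 ≤ V y a)
    (hVconvex : ∀ y, ConvexOn ℝ Set.univ (V y))
    (hV0 : ∀ y, V y 0 ≤ V0)
    (hGsub : ∀ y a b, G y a * (b - a) ≤ V y b - V y a)
    (hGbound : ∀ y a, |G y a| ≤ a₀)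
    (η : ℕ → ℝ) (hηpos : ∀ k, 1 ≤ k → 0 < η k)
    (v : ℕ → X × Y) (t : ℕ) :
    ‖sgmIterSeq η G Φ v (t + 1)‖
      ≤ Real.sqrt ((a₀ * κ) ^ 2 * (∑ k ∈ Icc 1 t, η k ^ 2)
          + 2 * V0 * ∑ k ∈ Icc 1 t, η k) := by
  have key : ∀ t : ℕ, ‖sgmIterSeq η G Φ v (t + 1)‖ ^ 2
      ≤ (a₀ * κ) ^ 2 * (∑ k ∈ Icc 1 t, η k ^ 2)
        + 2 * V0 * ∑ k ∈ Icc 1 t, η k := by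
    intro t
    induction t with
    | zero => simp [sgmIterSeq]
    | succ n ih =>
      set w := sgmIterSeq η G Φ v (n + 1) with hw
      set φ := Φ (v (n + 1)).1 with hφ
      set y := (v (n + 1)).2 with hy
      set a : ℝ := ⟪w, φ⟫ with ha
      set g : ℝ := G y a with hg
      have hstep : sgmIterSeq η G Φ v (n + 2) = w - (η (n + 1) * g) • φ := rfl
      have hexp : ‖w - (η (n + 1) * g) • φ‖ ^ 2
          = ‖w‖ ^ 2 - 2 * (η (n + 1) * g * a) + (η (n + 1) * g) ^ 2 * ‖φ‖ ^ 2 := by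
        rw [norm_sub_sq_real, real_inner_smul_right, norm_smul, Real.norm_eq_abs,
          mul_pow, sq_abs, ha]
        try ring
      have hηnn : 0 ≤ η (n + 1) := (hηpos (n + 1) (by omega)).le
      have hga : g * (0 - a) ≤ V y 0 - V y a := hGsub y a 0
      have h1 : - (g * a) ≤ V0 := by
        have := hVnonneg y a
        have := hV0 y
        nlinarith
      have hφκ : ‖φ‖ ≤ κ := hκ _
      have hφnn : (0:ℝ) ≤ ‖φ‖ := norm_nonneg _
      have hgb : |g| ≤ a₀ := hGbound y a
      have hsq : (η (n + 1) * g) ^ 2 * ‖φ‖ ^ 2 ≤ (a₀ * κ) ^ 2 * η (n + 1) ^ 2 := by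
        have hg2 : g ^ 2 ≤ a₀ ^ 2 := sq_le_sq' (neg_le_of_abs_le hgb) (le_of_abs_le hgb)
        have hp2 : ‖φ‖ ^ 2 ≤ κ ^ 2 := by nlinarith
        have h3 : g ^ 2 * ‖φ‖ ^ 2 ≤ a₀ ^ 2 * κ ^ 2 :=
          mul_le_mul hg2 hp2 (sq_nonneg _) (sq_nonneg _)
        have h4 := mul_le_mul_of_nonneg_left h3 (sq_nonneg (η (n + 1)))
        calc (η (n + 1) * g) ^ 2 * ‖φ‖ ^ 2 = η (n + 1) ^ 2 * (g ^ 2 * ‖φ‖ ^ 2) := by ring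
          _ ≤ η (n + 1) ^ 2 * (a₀ ^ 2 * κ ^ 2) := h4
          _ = (a₀ * κ) ^ 2 * η (n + 1) ^ 2 := by ring
      have hsum2 : ∑ k ∈ Icc 1 (n + 1), η k ^ 2
          = (∑ k ∈ Icc 1 n, η k ^ 2) + η (n + 1) ^ 2 :=
        Finset.sum_Icc_succ_top (by omega) _
      have hsum1 : ∑ k ∈ Icc 1 (n + 1), η k
          = (∑ k ∈ Icc 1 n, η k) + η (n + 1) :=
        Finset.sum_Icc_succ_top (by omega) _
      rw [show n + 1 + 1 = n + 2 from rfl, hstep, hexp, hsum2, hsum1]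
      nlinarith [mul_le_mul_of_nonneg_left h1 hηnn]
  have h := key t
  have hrhs : (0:ℝ) ≤ (a₀ * κ) ^ 2 * (∑ k ∈ Icc 1 t, η k ^ 2)
      + 2 * V0 * ∑ k ∈ Icc 1 t, η k := le_trans (sq_nonneg _) h
  calc ‖sgmIterSeq η G Φ v (t + 1)‖
      = Real.sqrt (‖sgmIterSeq η G Φ v (t + 1)‖ ^ 2) := by
        rw [Real.sqrt_sq (norm_nonneg _)]
    _ ≤ _ := Real.sqrt_le_sqrt h

end
end

section
/- Let q ≥ 0 and let t ∈ ℕ with t ≥ 3. Then Σ_{k=1}^{t−1} k^{−q}/(t−k) is at most 2^q (2 + 1/(1−q)) t^{−q} log t if q < 1; at most 8 t^{−1} log t if q = 1; and at most ((2^q + 2q)/(q−1)) t^{−1} if q > 1. -/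
/-!
Split the sum at `k = ⌊t/2⌋`. For `k ≤ t/2` we have `t - k ≥ t/2`, so the head is at most
`(2/t) ∑_{k ≤ t/2} k^{-q}`, and comparison with `∫₁^{t/2} x^{-q} dx` bounds that power sum by
`(t/2)^{1-q}/(1-q)`, `1 + log t` or `q/(q-1)` according to the three cases. For `k > t/2` we have
`k^{-q} ≤ 2^q t^{-q}`, and `∑ 1/(t-k)` is a harmonic sum, at most `1 + log t`. When `q > 1` the
factor `t^{-q} (1 + log t)` is absorbed into `t^{-1}/(q-1)` using `(q-1)(1 + log t) ≤ t^{q-1}`.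
-/

open Finset

lemma AntitoneOn.sum_Icc_one_le_add_integral {f : ℝ → ℝ} (hf : AntitoneOn f (Set.Ici 1))
    {m : ℕ} (hm : 1 ≤ m) : ∑ k ∈ Icc 1 m, f k ≤ f 1 + ∫ x in (1 : ℝ)..m, f x := by
  obtain ⟨n, rfl⟩ : ∃ n, m = n + 1 := ⟨m - 1, by omega⟩
  have h := (hf.mono Set.Icc_subset_Ici_self).sum_le_integral (x₀ := 1) (a := n)
  rw [← Ico_add_one_right_eq_Icc, sum_Ico_eq_sum_range, add_tsub_cancel_right,
    sum_range_succ']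
  push_cast at h ⊢
  rw [add_comm (n : ℝ)]
  linarith

lemma antitoneOn_rpow_neg {q : ℝ} (hq : 0 ≤ q) :
    AntitoneOn (fun x : ℝ => x ^ (-q)) (Set.Ici 1) := fun _ hx _ _ hxy =>
    Real.rpow_le_rpow_of_nonpos (zero_lt_one.trans_le hx) hxy (neg_nonpos.mpr hq)

lemma sum_Icc_rpow_neg_le_one_add_integral {q : ℝ} (hq : 0 ≤ q) {m : ℕ} (hm : 1 ≤ m) :
    ∑ k ∈ Icc 1 m, (k : ℝ) ^ (-q) ≤ 1 + ∫ x in (1 : ℝ)..m, x ^ (-q) := by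
  simpa using (antitoneOn_rpow_neg hq).sum_Icc_one_le_add_integral hm

lemma sum_Icc_rpow_neg_le_of_lt_one {q : ℝ} (hq0 : 0 ≤ q) (hq1 : q < 1) {m : ℕ}
    (hm : 1 ≤ m) :
    ∑ k ∈ Icc 1 m, (k : ℝ) ^ (-q) ≤ (m : ℝ) ^ (1 - q) / (1 - q) := by
  have h := sum_Icc_rpow_neg_le_one_add_integral hq0 hm
  rw [integral_rpow (Or.inl (by linarith)), Real.one_rpow, neg_add_eq_sub] at h
  have hu : 1 ≤ 1 / (1 - q) := by rw [le_div_iff₀ (by linarith)]; linarith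
  calc _ ≤ _ := h
    _ = (m : ℝ) ^ (1 - q) / (1 - q) + (1 - 1 / (1 - q)) := by ring
    _ ≤ _ := by linarith

lemma sum_Icc_rpow_neg_le_of_one_lt {q : ℝ} (hq : 1 < q) {m : ℕ} (hm : 1 ≤ m) :
    ∑ k ∈ Icc 1 m, (k : ℝ) ^ (-q) ≤ q / (q - 1) := by
  have h := sum_Icc_rpow_neg_le_one_add_integral (by linarith) hm
  have h0 : (0 : ℝ) ∉ Set.uIcc 1 (m : ℝ) := by
    rw [Set.uIcc_of_le (by exact_mod_cast hm)]; exact fun h => by linarith [h.1]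
  rw [integral_rpow (Or.inr ⟨by linarith, h0⟩), Real.one_rpow, neg_add_eq_sub] at h
  have hpos : 0 ≤ (m : ℝ) ^ (1 - q) := by positivity
  calc _ ≤ _ := h
    _ = q / (q - 1) - (m : ℝ) ^ (1 - q) / (q - 1) := by
      field_simp [sub_ne_zero.mpr hq.ne, sub_ne_zero.mpr hq.ne']; ring
    _ ≤ _ := by have := div_nonneg hpos (by linarith : (0 : ℝ) ≤ q - 1); linarith

lemma sum_Icc_inv_le_one_add_log (m : ℕ) : ∑ k ∈ Icc 1 m, (k : ℝ)⁻¹ ≤ 1 + Real.log m := by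
  simpa [harmonic_eq_sum_Icc] using harmonic_le_one_add_log m

lemma one_le_log_of_three_le {x : ℝ} (hx : 3 ≤ x) : 1 ≤ Real.log x := by
  rw [Real.le_log_iff_exp_le (by linarith)]
  exact Real.exp_one_lt_three.le.trans hx

lemma mul_one_add_log_le_rpow {x s : ℝ} (hx0 : 0 < x) (hx : 1 ≤ Real.log x) (hs : 0 ≤ s) :
    s * (1 + Real.log x) ≤ x ^ s := by
  -- `exp y ≥ 1 + y + y²/2` at `y = s log x`, and `s ≤ 1 + s²/2 ≤ 1 + (s log x)²/2`.
  have hexp := Real.quadratic_le_exp_of_nonneg (mul_nonneg hs (zero_le_one.trans hx))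
  rw [Real.rpow_def_of_pos hx0, mul_comm (Real.log x)]
  nlinarith [sq_nonneg (s - 1),
    mul_le_mul_of_nonneg_left (one_le_pow₀ (n := 2) hx) (sq_nonneg s)]

lemma div_two_rpow_neg {x : ℝ} (hx : 0 ≤ x) (q : ℝ) : (x / 2) ^ (-q) = 2 ^ q * x ^ (-q) := by
  rw [Real.div_rpow hx zero_le_two, Real.rpow_neg zero_le_two, div_inv_eq_mul, mul_comm]

lemma sum_Ioc_inv_sub_le_one_add_log (t m : ℕ) :
    ∑ k ∈ Ioc m (t - 1), ((t : ℝ) - k)⁻¹ ≤ 1 + Real.log t := by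
  have hsub : Ioc m (t - 1) ⊆ range t := fun k hk => by
    simp only [mem_Ioc, mem_range] at hk ⊢; omega
  have hreflect : ∑ k ∈ range t, ((t : ℝ) - k)⁻¹ = ∑ j ∈ range t, ((j + 1 : ℕ) : ℝ)⁻¹ := by
    rw [← sum_range_reflect]
    refine sum_congr rfl fun j hj => ?_
    rw [Nat.sub_sub, Nat.cast_sub (by have := mem_range.mp hj; omega)]
    push_cast
    ring
  calc _ ≤ ∑ k ∈ range t, ((t : ℝ) - k)⁻¹ :=
        sum_le_sum_of_subset_of_nonneg hsub fun k hk _ => by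
          have : (k : ℝ) < t := by exact_mod_cast mem_range.mp hk
          exact inv_nonneg.mpr (by linarith)
    _ = harmonic t := by simp [hreflect, harmonic]
    _ ≤ _ := harmonic_le_one_add_log t

lemma sum_Icc_div_sub_le_of_two_mul_le {f : ℕ → ℝ} (hf : ∀ k, 0 ≤ f k) {t m : ℕ}
    (hm : 2 * m ≤ t) : ∑ k ∈ Icc 1 m, f k / ((t : ℝ) - k) ≤ 2 / t * ∑ k ∈ Icc 1 m, f k := by
  rw [mul_sum]
  refine sum_le_sum fun k hk => ?_
  obtain ⟨hk1, hkm⟩ := mem_Icc.mp hk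
  have hkt : 2 * (k : ℝ) ≤ t := by exact_mod_cast (by omega : 2 * k ≤ t)
  have hk0 : (1 : ℝ) ≤ k := by exact_mod_cast hk1
  calc f k / ((t : ℝ) - k) ≤ f k / ((t : ℝ) / 2) :=
        div_le_div_of_nonneg_left (hf k) (by linarith) (by linarith)
    _ = 2 / t * f k := by ring

lemma sum_Ioc_rpow_neg_div_sub_le {q : ℝ} (hq : 0 ≤ q) {t m : ℕ} (hm : t ≤ 2 * (m + 1)) :
    ∑ k ∈ Ioc m (t - 1), (k : ℝ) ^ (-q) / ((t : ℝ) - k)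
      ≤ 2 ^ q * (t : ℝ) ^ (-q) * (1 + Real.log t) := by
  calc _ ≤ ∑ k ∈ Ioc m (t - 1), 2 ^ q * (t : ℝ) ^ (-q) * ((t : ℝ) - k)⁻¹ := by
        refine sum_le_sum fun k hk => ?_
        obtain ⟨hmk, hk_le⟩ := mem_Ioc.mp hk
        have hk : (t : ℝ) ≤ 2 * k := by exact_mod_cast (by omega : t ≤ 2 * k)
        have hkt : (k : ℝ) < t := by exact_mod_cast (by omega : k < t)
        rw [← div_two_rpow_neg (Nat.cast_nonneg t), ← div_eq_mul_inv]
        gcongr ?_ / _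
        exact Real.rpow_le_rpow_of_nonpos (by linarith) (by linarith) (neg_nonpos.mpr hq)
    _ ≤ _ := by
      rw [← mul_sum]
      exact mul_le_mul_of_nonneg_left (sum_Ioc_inv_sub_le_one_add_log t m) (by positivity)

lemma sum_Icc_rpow_neg_div_sub_le {q : ℝ} (hq : 0 ≤ q) (t : ℕ) :
    ∑ k ∈ Icc 1 (t - 1), (k : ℝ) ^ (-q) / ((t : ℝ) - k)
      ≤ 2 / t * ∑ k ∈ Icc 1 (t / 2), (k : ℝ) ^ (-q)
        + 2 ^ q * (t : ℝ) ^ (-q) * (1 + Real.log t) := by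
  have hIcc (n : ℕ) : Icc 1 n = Ioc 0 n := Icc_add_one_left_eq_Ioc 0 n
  rw [hIcc, hIcc, ← sum_Ioc_consecutive _ (Nat.zero_le (t / 2)) (by omega), ← hIcc]
  exact add_le_add
    (sum_Icc_div_sub_le_of_two_mul_le (fun k => by positivity) (Nat.mul_div_le t 2))
    (sum_Ioc_rpow_neg_div_sub_le hq (by omega))

lemma sum_Icc_rpow_neg_div_sub_le_of_lt_one {q : ℝ} (hq0 : 0 ≤ q) (hq1 : q < 1) {t : ℕ}
    (ht : 3 ≤ t) :
    ∑ k ∈ Icc 1 (t - 1), (k : ℝ) ^ (-q) / ((t : ℝ) - k)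
      ≤ 2 ^ q * (2 + 1 / (1 - q)) * (t : ℝ) ^ (-q) * Real.log t := by
  have htpos : (0 : ℝ) < t := by positivity
  have hL := one_le_log_of_three_le (by exact_mod_cast ht : (3 : ℝ) ≤ t)
  have hu : 0 < 1 / (1 - q) := one_div_pos.mpr (by linarith)
  have hA : 0 ≤ 2 ^ q * (t : ℝ) ^ (-q) := by positivity
  have hhead : 2 / t * ∑ k ∈ Icc 1 (t / 2), (k : ℝ) ^ (-q)
      ≤ 2 ^ q * (t : ℝ) ^ (-q) * (1 / (1 - q)) :=
    calc 2 / t * ∑ k ∈ Icc 1 (t / 2), (k : ℝ) ^ (-q)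
        ≤ 2 / t * (((t : ℝ) / 2) ^ (1 - q) / (1 - q)) := by
          gcongr
          refine (sum_Icc_rpow_neg_le_of_lt_one hq0 hq1 (by omega)).trans ?_
          gcongr
          exact Nat.cast_div_le
      _ = 2 / t * ((t : ℝ) / 2) ^ (1 + -q) * (1 / (1 - q)) := by
          rw [← sub_eq_add_neg]; ring
      _ = _ := by
          rw [Real.rpow_add (by positivity), Real.rpow_one, div_two_rpow_neg htpos.le]
          field_simp
  calc _ ≤ _ := sum_Icc_rpow_neg_div_sub_le hq0 t
    _ ≤ 2 ^ q * (t : ℝ) ^ (-q) * (1 / (1 - q))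
          + 2 ^ q * (t : ℝ) ^ (-q) * (1 + Real.log t) := by
        gcongr
    _ ≤ _ := by
        have := mul_nonneg (mul_nonneg hA (by linarith : 0 ≤ 1 / (1 - q) + 1))
          (by linarith : 0 ≤ Real.log t - 1)
        nlinarith

lemma sum_Icc_rpow_neg_one_div_sub_le {t : ℕ} (ht : 3 ≤ t) :
    ∑ k ∈ Icc 1 (t - 1), (k : ℝ) ^ (-1 : ℝ) / ((t : ℝ) - k) ≤ 8 * (t : ℝ)⁻¹ * Real.log t := by
  have hL := one_le_log_of_three_le (by exact_mod_cast ht : (3 : ℝ) ≤ t)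
  have hpow : ∑ k ∈ Icc 1 (t / 2), (k : ℝ) ^ (-1 : ℝ) ≤ 1 + Real.log t := by
    simp only [Real.rpow_neg_one]
    refine (sum_Icc_inv_le_one_add_log _).trans ?_
    gcongr
    · exact_mod_cast (by omega : 0 < t / 2)
    · exact_mod_cast Nat.div_le_self t 2
  calc _ ≤ _ := sum_Icc_rpow_neg_div_sub_le zero_le_one t
    _ ≤ 2 / t * (1 + Real.log t) + 2 ^ (1 : ℝ) * (t : ℝ) ^ (-1 : ℝ) * (1 + Real.log t) := by
        gcongr
    _ = 4 * (t : ℝ)⁻¹ * (1 + Real.log t) := by rw [Real.rpow_one, Real.rpow_neg_one]; ring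
    _ ≤ _ := by
        have : (0 : ℝ) ≤ (t : ℝ)⁻¹ := by positivity
        nlinarith

lemma sum_Icc_rpow_neg_div_sub_le_of_one_lt {q : ℝ} (hq : 1 < q) {t : ℕ} (ht : 3 ≤ t) :
    ∑ k ∈ Icc 1 (t - 1), (k : ℝ) ^ (-q) / ((t : ℝ) - k)
      ≤ ((2 : ℝ) ^ q + 2 * q) / (q - 1) * (t : ℝ)⁻¹ := by
  have htpos : (0 : ℝ) < t := by positivity
  have hL := one_le_log_of_three_le (by exact_mod_cast ht : (3 : ℝ) ≤ t)
  have htail : (t : ℝ) ^ (-q) * (1 + Real.log t) ≤ (t : ℝ)⁻¹ / (q - 1) := by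
    have hgrowth := mul_one_add_log_le_rpow htpos hL (by linarith : 0 ≤ q - 1)
    rw [show -q = -1 - (q - 1) by ring, Real.rpow_sub htpos, Real.rpow_neg_one,
      le_div_iff₀ (by linarith)]
    calc (t : ℝ)⁻¹ / (t : ℝ) ^ (q - 1) * (1 + Real.log t) * (q - 1)
        = (t : ℝ)⁻¹ * ((q - 1) * (1 + Real.log t) / (t : ℝ) ^ (q - 1)) := by ring
      _ ≤ (t : ℝ)⁻¹ * 1 := by gcongr; exact div_le_one_of_le₀ hgrowth (by positivity)
      _ = _ := mul_one _
  calc _ ≤ _ := sum_Icc_rpow_neg_div_sub_le (by linarith) t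
    _ ≤ 2 / t * (q / (q - 1)) + 2 ^ q * ((t : ℝ)⁻¹ / (q - 1)) := by
        rw [mul_assoc]
        gcongr
        exact sum_Icc_rpow_neg_le_of_one_lt hq (by omega)
    _ = _ := by field_simp; ring

/-- Lemma 6: estimates on `∑_{k=1}^{t-1} k^{−q}/(t−k)`. -/
theorem sum_inv_mul_rpow_bound (q : ℝ) (hq : 0 ≤ q) (t : ℕ) (ht : 3 ≤ t) :
    (q < 1 →
      ∑ k ∈ Icc 1 (t - 1), (k : ℝ) ^ (-q) / ((t : ℝ) - (k : ℝ))
        ≤ (2 : ℝ) ^ q * (2 + 1 / (1 - q)) * (t : ℝ) ^ (-q) * Real.log t) ∧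
    (q = 1 →
      ∑ k ∈ Icc 1 (t - 1), (k : ℝ) ^ (-q) / ((t : ℝ) - (k : ℝ))
        ≤ 8 * (t : ℝ)⁻¹ * Real.log t) ∧
    (1 < q →
      ∑ k ∈ Icc 1 (t - 1), (k : ℝ) ^ (-q) / ((t : ℝ) - (k : ℝ))
        ≤ ((2 : ℝ) ^ q + 2 * q) / (q - 1) * (t : ℝ)⁻¹) :=
  ⟨fun hq1 => sum_Icc_rpow_neg_div_sub_le_of_lt_one hq hq1 ht,
    fun hq1 => hq1 ▸ sum_Icc_rpow_neg_one_div_sub_le ht,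
    fun hq1 => sum_Icc_rpow_neg_div_sub_le_of_one_lt hq1 ht⟩
end

section
/- Let q ≥ 0 and let t ∈ ℕ with t ≥ 3. Then Σ_{k=1}^{t−1} k^{−q}/(t−k) ≤ 4 t^{−min(q,1)} log t. -/
open Finset

/-!
With `p = min q 1 ≤ 1`, each numerator satisfies `k ^ (-q) ≤ k ^ (-p) ≤ t ^ (1 - p) / k`. The
remaining sum `∑ 1 / (k (t - k))` splits by partial fractions into `2 / t` times the harmonic
number `H_{t-1} ≤ 1 + log t ≤ 2 log t`.
-/

lemma rpow_neg_le_rpow_one_sub_min_div {x y : ℝ} (q : ℝ) (hx : 1 ≤ x) (hxy : x ≤ y) :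
    x ^ (-q) ≤ y ^ (1 - min q 1) / x := by
  have hx0 : 0 < x := zero_lt_one.trans_le hx
  calc x ^ (-q) ≤ x ^ (-min q 1) :=
        Real.rpow_le_rpow_of_exponent_le hx (neg_le_neg (min_le_left q 1))
    _ = x ^ (1 - min q 1) / x := by
        rw [Real.rpow_sub hx0, Real.rpow_one, Real.rpow_neg hx0.le]
        field_simp
    _ ≤ y ^ (1 - min q 1) / x := by
        gcongr
        exact sub_nonneg.mpr (min_le_right q 1)

lemma sum_Icc_inv_sub_eq_sum_Icc_inv (t : ℕ) :
    ∑ k ∈ Icc 1 (t - 1), ((t : ℝ) - k)⁻¹ = ∑ k ∈ Icc 1 (t - 1), (k : ℝ)⁻¹ := by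
  refine sum_nbij' (t - ·) (t - ·) ?_ ?_ ?_ ?_ ?_ <;> intro k hk <;>
    simp only [mem_Icc] at hk ⊢
  any_goals omega
  rw [Nat.cast_sub (by omega)]

lemma sum_Icc_inv_mul_sub (t : ℕ) :
    ∑ k ∈ Icc 1 (t - 1), ((k : ℝ) * (t - k))⁻¹ = 2 / t * harmonic (t - 1) := by
  have partial_fractions : ∀ k ∈ Icc 1 (t - 1),
      ((k : ℝ) * (t - k))⁻¹ = (t : ℝ)⁻¹ * ((k : ℝ)⁻¹ + ((t : ℝ) - k)⁻¹) := by
    intro k hk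
    obtain ⟨hk1, hkt⟩ := mem_Icc.mp hk
    have hk0 : (k : ℝ) ≠ 0 := by positivity
    have htk : (t : ℝ) - k ≠ 0 := sub_ne_zero.mpr (by exact_mod_cast (by omega : t ≠ k))
    have ht0 : (t : ℝ) ≠ 0 := by exact_mod_cast (by omega : t ≠ 0)
    field_simp
    ring
  rw [sum_congr rfl partial_fractions, ← mul_sum, sum_add_distrib,
    sum_Icc_inv_sub_eq_sum_Icc_inv, harmonic_eq_sum_Icc]
  push_cast
  ring

lemma harmonic_pred_le_two_mul_log {t : ℕ} (ht : 3 ≤ t) :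
    (harmonic (t - 1) : ℝ) ≤ 2 * Real.log t := by
  have one_le_log : 1 ≤ Real.log t := by
    rw [Real.le_log_iff_exp_le (by positivity)]
    exact Real.exp_one_lt_three.le.trans (by exact_mod_cast ht)
  have log_pred_le : Real.log (t - 1 : ℕ) ≤ Real.log t :=
    Real.log_le_log (by exact_mod_cast (by omega : 0 < t - 1)) (by exact_mod_cast t.sub_le 1)
  linarith [harmonic_le_one_add_log (t - 1)]

theorem sum_inv_mul_rpow_bound'_general (q : ℝ) (t : ℕ) (ht : 3 ≤ t) :
    ∑ k ∈ Icc 1 (t - 1), (k : ℝ) ^ (-q) / ((t : ℝ) - (k : ℝ))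
      ≤ 4 * (t : ℝ) ^ (-(min q 1)) * Real.log t := by
  have ht0 : (0 : ℝ) < t := by positivity
  calc ∑ k ∈ Icc 1 (t - 1), (k : ℝ) ^ (-q) / ((t : ℝ) - (k : ℝ))
      ≤ ∑ k ∈ Icc 1 (t - 1), (t : ℝ) ^ (1 - min q 1) * ((k : ℝ) * (t - k))⁻¹ := by
        refine sum_le_sum fun k hk => ?_
        obtain ⟨hk1, hkt⟩ := mem_Icc.mp hk
        replace hk1 : (1 : ℝ) ≤ k := by exact_mod_cast hk1
        replace hkt : (k : ℝ) < t := by exact_mod_cast (by omega : k < t)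
        rw [mul_inv, ← mul_assoc, ← div_eq_mul_inv, ← div_eq_mul_inv]
        gcongr
        exact rpow_neg_le_rpow_one_sub_min_div q hk1 hkt.le
    _ = 2 * (t : ℝ) ^ (-(min q 1)) * harmonic (t - 1) := by
        rw [← mul_sum, sum_Icc_inv_mul_sub, Real.rpow_neg ht0.le, Real.rpow_sub ht0,
          Real.rpow_one]
        field_simp
    _ ≤ 4 * (t : ℝ) ^ (-(min q 1)) * Real.log t := by
        nlinarith [harmonic_pred_le_two_mul_log ht, Real.rpow_nonneg ht0.le (-(min q 1))]

/-- Lemma 8: a uniform estimate on `∑_{k=1}^{t-1} k^{−q}/(t−k)`. -/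
theorem sum_inv_mul_rpow_bound' (q : ℝ) (hq : 0 ≤ q) (t : ℕ) (ht : 3 ≤ t) :
    ∑ k ∈ Icc 1 (t - 1), (k : ℝ) ^ (-q) / ((t : ℝ) - (k : ℝ))
      ≤ 4 * (t : ℝ) ^ (-(min q 1)) * Real.log t :=
  sum_inv_mul_rpow_bound'_general q t ht
end
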